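/- Consider the translated quadratic system x̃' = Ãx̃ + H(x̃⊗x̃) + B̃ where H is generalized energy-preserving with respect to a symmetric positive definite matrix Q (xᵀQH(x⊗x) = 0 for all x). Let V(x̃) = ½x̃ᵀQx̃. Then along any trajectory, d/dt V(x̃(t)) = x̃(t)ᵀ(QÃ)_s x̃(t) + x̃(t)ᵀQB̃, where (QÃ)_s = ½(QÃ + ÃᵀQ). Consequently, if (QÃ)_s is negative definite, then d/dt V(x̃(t)) < 0 whenever ‖x̃(t)‖ > ‖QB̃‖/σ_min(-(QÃ)_s). -/

import Mathlib

/-!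
Since `Q` is symmetric, `V' = x̃ᵀQx̃'`; energy preservation removes the quadratic term
`x̃ᵀQH(x̃⊗x̃)`, and `x̃ᵀQÃx̃` only sees the symmetric part `(QÃ)_s`. With `σ` bounding
`-(QÃ)_s` from below and Cauchy–Schwarz on `x̃ᵀQB̃`, `V' ≤ ‖x̃‖ (‖QB̃‖ - σ‖x̃‖)`.
-/

open Matrix

section Derivatives

variable {ι : Type*} [Fintype ι] {f g : ℝ → ι → ℝ} {f' g' : ι → ℝ} {t : ℝ}

theorem HasDerivAt.dotProduct (hf : HasDerivAt f f' t) (hg : HasDerivAt g g' t) :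
    HasDerivAt (fun s => f s ⬝ᵥ g s) (f' ⬝ᵥ g t + f t ⬝ᵥ g') t := by
  have h := HasDerivAt.fun_sum (u := Finset.univ) fun i _ =>
    (hasDerivAt_pi.1 hf i).fun_mul (hasDerivAt_pi.1 hg i)
  rw [Finset.sum_add_distrib] at h
  exact h

theorem HasDerivAt.mulVec {κ : Type*} (M : Matrix κ ι ℝ) (hf : HasDerivAt f f' t) :
    HasDerivAt (fun s => M *ᵥ f s) (M *ᵥ f') t :=
  hasDerivAt_pi.2 fun i => by
    simpa [Matrix.mulVec] using (hasDerivAt_const t (M i)).dotProduct hf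

theorem HasDerivAt.half_dotProduct_mulVec_of_isSymm {Q : Matrix ι ι ℝ} (hQ : Q.IsSymm)
    (hf : HasDerivAt f f' t) :
    HasDerivAt (fun s => (1 / 2 : ℝ) * (f s ⬝ᵥ Q *ᵥ f s)) (f t ⬝ᵥ Q *ᵥ f') t := by
  have h := (hf.dotProduct (hf.mulVec Q)).const_mul (1 / 2 : ℝ)
  rwa [← hQ.eq, dotProduct_transpose_mulVec, hQ.eq, ← two_mul, ← mul_assoc,
    one_div_mul_cancel two_ne_zero, one_mul] at h

end Derivatives

section QuadraticForms

variable {ι : Type*} [Fintype ι]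

theorem dotProduct_half_add_transpose_mulVec {R : Type*} [Field R] [NeZero (2 : R)]
    (M : Matrix ι ι R) (x : ι → R) :
    x ⬝ᵥ ((1 / 2 : R) • (M + Mᵀ)) *ᵥ x = x ⬝ᵥ M *ᵥ x := by
  rw [smul_mulVec, add_mulVec, dotProduct_smul, dotProduct_add, dotProduct_transpose_mulVec,
    ← two_mul, smul_eq_mul, ← mul_assoc, one_div_mul_cancel two_ne_zero, one_mul]

theorem dotProduct_symmPart_mulVec_of_isSymm {Q : Matrix ι ι ℝ} (hQ : Q.IsSymm)
    (A : Matrix ι ι ℝ) (x : ι → ℝ) :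
    x ⬝ᵥ ((1 / 2 : ℝ) • (Q * A + Aᵀ * Q)) *ᵥ x = x ⬝ᵥ Q *ᵥ (A *ᵥ x) := by
  rw [← hQ.eq, ← transpose_mul, hQ.eq, dotProduct_half_add_transpose_mulVec, mulVec_mulVec]

theorem dotProduct_mulVec_add_dotProduct_neg_of_lt_sqrt {M : Matrix ι ι ℝ} {σ : ℝ} (hσ : 0 < σ)
    (hM : ∀ v : ι → ℝ, σ * ∑ i, v i ^ 2 ≤ v ⬝ᵥ (-M) *ᵥ v) {u w : ι → ℝ}
    (hu : √(∑ i, w i ^ 2) / σ < √(∑ i, u i ^ 2)) :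
    u ⬝ᵥ M *ᵥ u + u ⬝ᵥ w < 0 := by
  set a := √(∑ i, u i ^ 2)
  set b := √(∑ i, w i ^ 2)
  have ha : 0 < a := (div_nonneg (Real.sqrt_nonneg _) hσ.le).trans_lt hu
  have hquad : u ⬝ᵥ M *ᵥ u ≤ -(σ * a ^ 2) := by
    have h := hM u
    rw [neg_mulVec, dotProduct_neg, ← Real.sq_sqrt (Finset.sum_nonneg fun i _ => sq_nonneg (u i))]
      at h
    linarith
  have hlin : u ⬝ᵥ w ≤ a * b := Real.sum_mul_le_sqrt_mul_sqrt _ u w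
  have hba : b < σ * a := by rwa [div_lt_iff₀ hσ, mul_comm] at hu
  nlinarith

end QuadraticForms

theorem hasDerivAt_half_dotProduct_mulVec_of_energyPreserving {ι : Type*} [Fintype ι]
    {A Q : Matrix ι ι ℝ} {H : Matrix ι (ι × ι) ℝ} {B : ι → ℝ} (hQ : Q.IsSymm)
    (hH : ∀ x : ι → ℝ, x ⬝ᵥ Q *ᵥ (H *ᵥ fun p => x p.1 * x p.2) = 0)
    {x : ℝ → ι → ℝ} {t : ℝ}
    (hx : HasDerivAt x (A *ᵥ x t + H *ᵥ (fun p => x t p.1 * x t p.2) + B) t) :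
    HasDerivAt (fun s => (1 / 2 : ℝ) * (x s ⬝ᵥ Q *ᵥ x s))
      (x t ⬝ᵥ ((1 / 2 : ℝ) • (Q * A + Aᵀ * Q)) *ᵥ x t + x t ⬝ᵥ Q *ᵥ B) t := by
  convert hx.half_dotProduct_mulVec_of_isSymm hQ using 1
  rw [mulVec_add, mulVec_add, dotProduct_add, dotProduct_add, hH, add_zero,
    dotProduct_symmPart_mulVec_of_isSymm hQ]

/-- For the translated system `x̃' = Ãx̃ + H(x̃⊗x̃) + B̃` with `H` generalized
energy-preserving w.r.t. `Q`, the function `V(x̃)=½x̃ᵀQx̃` satisfies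
`d/dt V = x̃ᵀ(QÃ)_s x̃ + x̃ᵀQB̃`; if `(QÃ)_s` is negative definite then
`d/dt V < 0` whenever `‖x̃‖ > ‖QB̃‖/σ_min(-(QÃ)_s)`. -/
theorem stmt_9 (n : ℕ) (Atil : Matrix (Fin n) (Fin n) ℝ)
    (H : Matrix (Fin n) (Fin n × Fin n) ℝ) (Btil : Fin n → ℝ)
    (Q : Matrix (Fin n) (Fin n) ℝ) (hQ : Q.PosDef)
    (hH : ∀ x : Fin n → ℝ, x ⬝ᵥ Q.mulVec (H.mulVec (fun p => x p.1 * x p.2)) = 0)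
    (x : ℝ → Fin n → ℝ)
    (hx : ∀ t, HasDerivAt x
      (Atil.mulVec (x t) + H.mulVec (fun p => x t p.1 * x t p.2) + Btil) t) :
    (∀ t, deriv (fun s => (1 / 2 : ℝ) * (x s ⬝ᵥ Q.mulVec (x s))) t
      = x t ⬝ᵥ (((1 / 2 : ℝ) • (Q * Atil + Atilᵀ * Q)).mulVec (x t))
        + x t ⬝ᵥ Q.mulVec Btil) ∧
    ((-((1 / 2 : ℝ) • (Q * Atil + Atilᵀ * Q))).PosDef →
      ∀ σ : ℝ, 0 < σ →
      -- `σ` is the smallest eigenvalue of `-(QÃ)_s`: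
      (∀ v : Fin n → ℝ, σ * ∑ i, v i ^ 2
        ≤ v ⬝ᵥ (-((1 / 2 : ℝ) • (Q * Atil + Atilᵀ * Q))).mulVec v) →
      ∀ t, Real.sqrt (∑ i, (x t i) ^ 2)
          > Real.sqrt (∑ i, (Q.mulVec Btil i) ^ 2) / σ →
        deriv (fun s => (1 / 2 : ℝ) * (x s ⬝ᵥ Q.mulVec (x s))) t < 0) := by
  have hQsymm : Q.IsSymm := isHermitian_iff_isSymm.1 hQ.isHermitian
  have hV : ∀ t, deriv (fun s => (1 / 2 : ℝ) * (x s ⬝ᵥ Q *ᵥ x s)) t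
      = x t ⬝ᵥ ((1 / 2 : ℝ) • (Q * Atil + Atilᵀ * Q)) *ᵥ x t + x t ⬝ᵥ Q *ᵥ Btil := fun t =>
    (hasDerivAt_half_dotProduct_mulVec_of_energyPreserving hQsymm hH (hx t)).deriv
  refine ⟨hV, fun _ σ hσ hσmin t hnorm => ?_⟩
  rw [hV t]
  exact dotProduct_mulVec_add_dotProduct_neg_of_lt_sqrt hσ hσmin hnorm
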